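/- arXiv:2507.12918 — 2 statements merged into one kernel-verified Lean document; each statement's English description precedes it below -/
import Mathlib

section
/- Let a, b, c : ℕ with a ≥ 1, b ≥ 1, c ≥ 1, let M = a + b + 1, and let x : ℕ → ℕ satisfy x 0 ≤ b and x (n+1) ≤ a * (x n)^c + b for all n. Then x n ≤ M^((c+1)^n) for all n. -/
theorem nonlinear_recurrence_bound (a b c : ℕ) (ha : 1 ≤ a) (hb : 1 ≤ b) (hc : 1 ≤ c)
    (x : ℕ → ℕ) (h0 : x 0 ≤ b) (hrec : ∀ n, x (n + 1) ≤ a * (x n) ^ c + b) :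
    ∀ n, x n ≤ (a + b + 1) ^ ((c + 1) ^ n) := by
  intro n
  induction n with
  | zero => simpa using h0.trans (by omega)
  | succ n ih =>
    have hM : 1 ≤ a + b + 1 := by omega
    calc x (n + 1) ≤ a * (x n) ^ c + b := hrec n
      _ ≤ a * ((a + b + 1) ^ ((c + 1) ^ n)) ^ c + b := by gcongr
      _ ≤ (a + b) * ((a + b + 1) ^ ((c + 1) ^ n)) ^ c := by
          have h1 : 1 ≤ ((a + b + 1) ^ ((c + 1) ^ n)) ^ c := Nat.one_le_pow _ _ (by positivity)
          nlinarith
      _ = (a + b) * (a + b + 1) ^ ((c + 1) ^ n * c) := by rw [← pow_mul]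
      _ ≤ (a + b + 1) ^ 1 * (a + b + 1) ^ ((c + 1) ^ n * c) :=
          Nat.mul_le_mul (by simp) le_rfl
      _ = (a + b + 1) ^ (1 + (c + 1) ^ n * c) := by rw [← pow_add]
      _ ≤ (a + b + 1) ^ ((c + 1) ^ (n + 1)) := by
          apply Nat.pow_le_pow_right hM
          have : 1 ≤ (c + 1) ^ n := Nat.one_le_pow _ _ (by omega)
          rw [pow_succ]
          nlinarith
end

section
/- Let V be a countable type with a designated root r : V and a parent function parent : V → Option V with parent r = none. Let p : V → ℝ≥0∞ satisfy p r = 1 and, for every v, ∑' over {w : V // parent w = some v} of p w ≤ p v. Let A, B ⊆ V be sets such that every v ∈ A with v ≠ r has parent v = some w for some w ∈ B. Then ∑'_{v ∈ A} p v ≤ 1 + ∑'_{w ∈ B} p w. -/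
theorem knowledge_propagation {V : Type*} [Countable V] (r : V)
    (parent : V → Option V) (hroot : parent r = none)
    (p : V → ENNReal) (hr : p r = 1)
    (hsub : ∀ v : V, ∑' w : {w : V // parent w = some v}, p w ≤ p v)
    (A B : Set V)
    (hAB : ∀ v ∈ A, v ≠ r → ∃ w ∈ B, parent v = some w) :
    ∑' v : A, p v ≤ 1 + ∑' w : B, p w := by
  have hsubset : A ⊆ {r} ∪ ⋃ w ∈ B, {v | parent v = some w} := by
    intro v hv
    by_cases hvr : v = r
    · exact Or.inl hvr
    · obtain ⟨w, hwB, hpw⟩ := hAB v hv hvr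
      exact Or.inr (Set.mem_biUnion hwB hpw)
  calc ∑' v : A, p v ≤ ∑' v : ↑({r} ∪ ⋃ w ∈ B, {v | parent v = some w}), p v :=
        ENNReal.tsum_mono_subtype p hsubset
    _ ≤ (∑' v : ({r} : Set V), p v) + ∑' v : ↑(⋃ w ∈ B, {v | parent v = some w}), p v :=
        ENNReal.tsum_union_le p _ _
    _ ≤ 1 + ∑' w : B, p w := by
        gcongr
        · simp [tsum_singleton, hr]
        · calc ∑' v : ↑(⋃ w ∈ B, {v | parent v = some w}), p v
              ≤ ∑' w : B, ∑' v : {v | parent v = some (w : V)}, p v :=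
              ENNReal.tsum_biUnion_le_tsum p B _
          _ ≤ ∑' w : B, p w := ENNReal.tsum_le_tsum fun w => hsub w
end
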